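/- Let A ∈ ℝ^{m×n}, let T ∈ ℝ^{n×n} be symmetric (in the paper T = −Q − Θ^{-1} with Q positive semidefinite and Θ^{-1} diagonal positive definite), and let M = [[T, Aᵀ],[A, 0]]. Suppose λ ≠ 0 is an eigenvalue of M that is not an eigenvalue of T, let x = (x₁, x₂) with x₁ ∈ ℝⁿ, x₂ ∈ ℝᵐ be a unit eigenvector of M for λ, and set ζ = min{ |λ − ν| : ν an eigenvalue of T }. Then ‖x₁‖ ≤ ‖A‖ / √(ζ² + ‖A‖²) and ‖x₂‖ ≤ ‖A‖ / √(λ² + ‖A‖²). -/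

import Mathlib

open Matrix

/-- Euclidean norm of a real vector. -/
noncomputable def euclEnorm {ι : Type*} [Fintype ι] (x : ι → ℝ) : ℝ :=
  Real.sqrt (∑ i, (x i) ^ 2)

/-- Spectral norm (largest singular value) of a real matrix. -/
noncomputable def specNorm {m n : ℕ} (A : Matrix (Fin m) (Fin n) ℝ) : ℝ :=
  Real.sqrt (⨆ i, (Matrix.isHermitian_mul_conjTranspose_self A).eigenvalues i)

/-!
Write `x = (x₁, x₂)`. The eigen-equation splits into `(λ - T) x₁ = Aᵀ x₂` and `A x₁ = λ x₂`.
Expanding `x₁` in an orthonormal eigenbasis of `T` gives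
`ζ ‖x₁‖ ≤ ‖(λ - T) x₁‖ = ‖Aᵀ x₂‖ ≤ ‖A‖ ‖x₂‖`, and `|λ| ‖x₂‖ = ‖A x₁‖ ≤ ‖A‖ ‖x₁‖`;
here `ζ > 0` because `λ` is not an eigenvalue of `T`. Since `‖x₁‖² + ‖x₂‖² = 1`, an inequality
`u a ≤ s b` between the two norms `a, b` gives `a² (u² + s²) ≤ s² (a² + b²) = s²`, which is each
of the claimed bounds.
-/

section EuclideanNorm

variable {ι : Type*} [Fintype ι]

theorem euclEnorm_eq_norm (x : ι → ℝ) : euclEnorm x = ‖WithLp.toLp 2 x‖ := by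
  simp [euclEnorm, EuclideanSpace.norm_eq]

theorem euclEnorm_nonneg (x : ι → ℝ) : 0 ≤ euclEnorm x :=
  Real.sqrt_nonneg _

theorem euclEnorm_smul (c : ℝ) (x : ι → ℝ) : euclEnorm (c • x) = |c| * euclEnorm x := by
  simp only [euclEnorm_eq_norm, WithLp.toLp_smul, norm_smul, Real.norm_eq_abs]

theorem euclEnorm_sq (x : ι → ℝ) : euclEnorm x ^ 2 = x ⬝ᵥ x := by
  rw [euclEnorm, Real.sq_sqrt (Finset.sum_nonneg fun i _ => sq_nonneg _)]
  simp only [dotProduct, sq]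

theorem dotProduct_le_euclEnorm_mul (x y : ι → ℝ) : x ⬝ᵥ y ≤ euclEnorm x * euclEnorm y := by
  simpa [euclEnorm_eq_norm, EuclideanSpace.inner_toLp_toLp, dotProduct_comm] using
    real_inner_le_norm (WithLp.toLp 2 x : EuclideanSpace ℝ ι) (WithLp.toLp 2 y)

theorem euclEnorm_sq_eq_inl_add_inr {κ : Type*} [Fintype κ] (x : ι ⊕ κ → ℝ) :
    euclEnorm x ^ 2 = euclEnorm (x ∘ Sum.inl) ^ 2 + euclEnorm (x ∘ Sum.inr) ^ 2 := by
  simp only [euclEnorm_sq, dotProduct, Fintype.sum_sum_type, Function.comp_apply]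

end EuclideanNorm

namespace Matrix.IsHermitian

variable {ι : Type*} [Fintype ι] [DecidableEq ι] {B : Matrix ι ι ℝ} (hB : B.IsHermitian)

theorem euclEnorm_sq_eq_sum_sq (v : ι → ℝ) :
    euclEnorm v ^ 2 = ∑ i, (v ⬝ᵥ ⇑(hB.eigenvectorBasis i)) ^ 2 := by
  rw [euclEnorm_eq_norm, ← hB.eigenvectorBasis.sum_sq_inner_right]
  rfl

theorem mulVec_dotProduct_eigenvectorBasis (v : ι → ℝ) (i : ι) :
    (B *ᵥ v) ⬝ᵥ ⇑(hB.eigenvectorBasis i) =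
      hB.eigenvalues i * (v ⬝ᵥ ⇑(hB.eigenvectorBasis i)) := by
  rw [dotProduct_comm, dotProduct_mulVec, ← mulVec_transpose,
    ← conjTranspose_eq_transpose_of_trivial, hB.eq, hB.mulVec_eigenvectorBasis, dotProduct_comm,
    dotProduct_smul, smul_eq_mul]

theorem dotProduct_mulVec_eq_sum (v : ι → ℝ) :
    v ⬝ᵥ (B *ᵥ v) = ∑ i, hB.eigenvalues i * (v ⬝ᵥ ⇑(hB.eigenvectorBasis i)) ^ 2 := by
  have hParseval :=
    hB.eigenvectorBasis.sum_inner_mul_inner (WithLp.toLp 2 v) (WithLp.toLp 2 (B *ᵥ v))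
  simp only [EuclideanSpace.inner_eq_star_dotProduct, star_trivial] at hParseval
  rw [dotProduct_comm, ← hParseval]
  refine Finset.sum_congr rfl fun i _ => ?_
  rw [hB.mulVec_dotProduct_eigenvectorBasis, dotProduct_comm]
  ring

theorem dotProduct_mulVec_le {c : ℝ} (hc : ∀ i, hB.eigenvalues i ≤ c) (v : ι → ℝ) :
    v ⬝ᵥ (B *ᵥ v) ≤ c * euclEnorm v ^ 2 := by
  rw [hB.dotProduct_mulVec_eq_sum, hB.euclEnorm_sq_eq_sum_sq, Finset.mul_sum]
  exact Finset.sum_le_sum fun i _ => mul_le_mul_of_nonneg_right (hc i) (sq_nonneg _)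

theorem iInf_abs_sub_eigenvalues_mul_euclEnorm_le (c : ℝ) (v : ι → ℝ) :
    (⨅ i, |c - hB.eigenvalues i|) * euclEnorm v ≤ euclEnorm (c • v - B *ᵥ v) := by
  have hζ : 0 ≤ ⨅ i, |c - hB.eigenvalues i| := Real.iInf_nonneg fun i => abs_nonneg _
  refine (sq_le_sq₀ (mul_nonneg hζ (euclEnorm_nonneg v)) (euclEnorm_nonneg _)).mp ?_
  rw [mul_pow, hB.euclEnorm_sq_eq_sum_sq, hB.euclEnorm_sq_eq_sum_sq, Finset.mul_sum]
  refine Finset.sum_le_sum fun i _ => ?_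
  have hζi : ⨅ j, |c - hB.eigenvalues j| ≤ |c - hB.eigenvalues i| :=
    ciInf_le (Set.finite_range _).bddBelow i
  rw [sub_dotProduct, hB.mulVec_dotProduct_eigenvectorBasis, smul_dotProduct, smul_eq_mul,
    ← sub_mul, mul_pow, ← sq_abs (c - _)]
  gcongr

theorem iInf_abs_sub_eigenvalues_pos [Nonempty ι] {c : ℝ}
    (hc : ¬ ∃ v : ι → ℝ, v ≠ 0 ∧ B *ᵥ v = c • v) : 0 < ⨅ i, |c - hB.eigenvalues i| := by
  obtain ⟨i, hi⟩ := Finite.exists_min fun i => |c - hB.eigenvalues i|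
  rw [le_antisymm (ciInf_le (Set.finite_range _).bddBelow i) (le_ciInf hi), abs_pos, sub_ne_zero]
  rintro rfl
  refine hc ⟨_, fun h => ?_, hB.mulVec_eigenvectorBasis i⟩
  exact hB.eigenvectorBasis.orthonormal.ne_zero i (WithLp.ofLp_injective 2 h)

end Matrix.IsHermitian

theorem Matrix.fromBlocks_mulVec_eq_smul_iff {l o α : Type*} [Fintype l] [Fintype o]
    [CommRing α]
    (P : Matrix l l α) (Q : Matrix l o α) (R : Matrix o l α) (S : Matrix o o α)
    (x : l ⊕ o → α) (c : α) :
    fromBlocks P Q R S *ᵥ x = c • x ↔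
      P *ᵥ (x ∘ Sum.inl) + Q *ᵥ (x ∘ Sum.inr) = c • (x ∘ Sum.inl) ∧
        R *ᵥ (x ∘ Sum.inl) + S *ᵥ (x ∘ Sum.inr) = c • (x ∘ Sum.inr) := by
  conv_lhs => rw [← Sum.elim_comp_inl_inr x, fromBlocks_mulVec]
  simp only [funext_iff, Sum.forall, Sum.elim_inl, Sum.elim_inr, Sum.elim_comp_inl,
    Sum.elim_comp_inr, Pi.smul_apply, Function.comp_apply]

section SpectralNorm

variable {m n : ℕ} (A : Matrix (Fin m) (Fin n) ℝ)

theorem specNorm_nonneg : 0 ≤ specNorm A :=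
  Real.sqrt_nonneg _

theorem eigenvalues_mul_conjTranspose_le_specNorm_sq (i : Fin m) :
    (isHermitian_mul_conjTranspose_self A).eigenvalues i ≤ specNorm A ^ 2 := by
  have hle :=
    le_ciSup (Set.finite_range (isHermitian_mul_conjTranspose_self A).eigenvalues).bddAbove i
  rwa [specNorm,
    Real.sq_sqrt (((posSemidef_self_mul_conjTranspose A).eigenvalues_nonneg i).trans hle)]

theorem euclEnorm_transpose_mulVec_le (w : Fin m → ℝ) :
    euclEnorm (Aᵀ *ᵥ w) ≤ specNorm A * euclEnorm w := by
  refine (sq_le_sq₀ (euclEnorm_nonneg _)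
    (mul_nonneg (specNorm_nonneg A) (euclEnorm_nonneg w))).mp ?_
  calc euclEnorm (Aᵀ *ᵥ w) ^ 2 = w ⬝ᵥ ((A * Aᴴ) *ᵥ w) := by
        rw [euclEnorm_sq, conjTranspose_eq_transpose_of_trivial, ← mulVec_mulVec,
          dotProduct_mulVec, vecMul_transpose, dotProduct_comm]
    _ ≤ specNorm A ^ 2 * euclEnorm w ^ 2 :=
        (isHermitian_mul_conjTranspose_self A).dotProduct_mulVec_le
          (eigenvalues_mul_conjTranspose_le_specNorm_sq A) w
    _ = (specNorm A * euclEnorm w) ^ 2 := (mul_pow _ _ _).symm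

/-- `specNorm` is defined through `A * Aᴴ`, so the bound for `A` itself is obtained from the one
for `Aᵀ`: `‖A v‖² = ⟪Aᵀ A v, v⟫ ≤ ‖A‖ ‖A v‖ ‖v‖`. -/
theorem euclEnorm_mulVec_le (v : Fin n → ℝ) :
    euclEnorm (A *ᵥ v) ≤ specNorm A * euclEnorm v := by
  rcases (euclEnorm_nonneg (A *ᵥ v)).eq_or_lt with h0 | hpos
  · rw [← h0]
    exact mul_nonneg (specNorm_nonneg A) (euclEnorm_nonneg v)
  refine le_of_mul_le_mul_left ?_ hpos
  calc euclEnorm (A *ᵥ v) * euclEnorm (A *ᵥ v) = (Aᵀ *ᵥ (A *ᵥ v)) ⬝ᵥ v := by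
        rw [← sq, euclEnorm_sq, mulVec_transpose, ← dotProduct_mulVec]
    _ ≤ euclEnorm (Aᵀ *ᵥ (A *ᵥ v)) * euclEnorm v := dotProduct_le_euclEnorm_mul _ _
    _ ≤ specNorm A * euclEnorm (A *ᵥ v) * euclEnorm v := by
        gcongr
        · exact euclEnorm_nonneg v
        · exact euclEnorm_transpose_mulVec_le A _
    _ = euclEnorm (A *ᵥ v) * (specNorm A * euclEnorm v) := by ring

end SpectralNorm

theorem le_div_sqrt_sq_add_sq_of_mul_le {a b s u : ℝ} (ha : 0 ≤ a) (hb : 0 ≤ b) (hs : 0 ≤ s)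
    (hu : 0 < u) (hab : a ^ 2 + b ^ 2 = 1) (h : u * a ≤ s * b) :
    a ≤ s / √(u ^ 2 + s ^ 2) := by
  rw [le_div_iff₀ (by positivity), ← sq_le_sq₀ (by positivity) hs, mul_pow,
    Real.sq_sqrt (by positivity)]
  nlinarith [mul_le_mul h h (by positivity) (by positivity)]

theorem stmt_17 {m n : ℕ} (A : Matrix (Fin m) (Fin n) ℝ)
    (T : Matrix (Fin n) (Fin n) ℝ) (hT : T.IsHermitian)
    (M : Matrix (Fin n ⊕ Fin m) (Fin n ⊕ Fin m) ℝ)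
    (hMdef : M = Matrix.fromBlocks T Aᵀ A 0)
    (lam : ℝ) (hlam : lam ≠ 0)
    (hnotT : ¬ ∃ v : Fin n → ℝ, v ≠ 0 ∧ T.mulVec v = lam • v)
    (x : Fin n ⊕ Fin m → ℝ)
    (heig : M.mulVec x = lam • x)
    (hxnorm : euclEnorm x = 1)
    (ζ : ℝ) (hζ : ζ = ⨅ i, |lam - hT.eigenvalues i|) :
    euclEnorm (x ∘ Sum.inl) ≤ specNorm A / Real.sqrt (ζ ^ 2 + specNorm A ^ 2) ∧
    euclEnorm (x ∘ Sum.inr) ≤ specNorm A / Real.sqrt (lam ^ 2 + specNorm A ^ 2) := by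
  subst hMdef hζ
  obtain ⟨hTop, hBot⟩ := (fromBlocks_mulVec_eq_smul_iff T Aᵀ A 0 x lam).mp heig
  rw [zero_mulVec, add_zero] at hBot
  have hnorm : euclEnorm (x ∘ Sum.inl) ^ 2 + euclEnorm (x ∘ Sum.inr) ^ 2 = 1 := by
    rw [← euclEnorm_sq_eq_inl_add_inr, hxnorm, one_pow]
  have hx₂ : |lam| * euclEnorm (x ∘ Sum.inr) ≤ specNorm A * euclEnorm (x ∘ Sum.inl) := by
    rw [← euclEnorm_smul, ← hBot]
    exact euclEnorm_mulVec_le A _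
  refine ⟨?_, ?_⟩
  · rcases isEmpty_or_nonempty (Fin n) with hn | hn
    -- here `ζ` is the junk value `⨅` over an empty type, but `x ∘ Sum.inl` is the empty vector
    · simp only [euclEnorm, Finset.univ_eq_empty, Finset.sum_empty, Real.sqrt_zero]
      exact div_nonneg (specNorm_nonneg A) (Real.sqrt_nonneg _)
    have hx₁ : (⨅ i, |lam - hT.eigenvalues i|) * euclEnorm (x ∘ Sum.inl) ≤
        specNorm A * euclEnorm (x ∘ Sum.inr) :=
      calc _ ≤ euclEnorm (lam • (x ∘ Sum.inl) - T *ᵥ (x ∘ Sum.inl)) :=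
            hT.iInf_abs_sub_eigenvalues_mul_euclEnorm_le lam _
        _ = euclEnorm (Aᵀ *ᵥ (x ∘ Sum.inr)) := by rw [← hTop, add_sub_cancel_left]
        _ ≤ _ := euclEnorm_transpose_mulVec_le A _
    exact le_div_sqrt_sq_add_sq_of_mul_le (euclEnorm_nonneg _) (euclEnorm_nonneg _)
      (specNorm_nonneg A) (hT.iInf_abs_sub_eigenvalues_pos hnotT) hnorm hx₁
  · simpa only [sq_abs] using le_div_sqrt_sq_add_sq_of_mul_le (euclEnorm_nonneg _)
      (euclEnorm_nonneg _) (specNorm_nonneg A) (abs_pos.mpr hlam) (by linarith) hx₂
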